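/- arXiv:2303.01095 — 3 statements merged into one kernel-verified Lean document; each statement's English description precedes it below -/
import Mathlib

section
/- Let A be a real positive semidefinite n×n matrix, b a vector in R^n, and x a vector satisfying A x = b with xᵀb ≠ 0. Then for every positive semidefinite matrix X satisfying ⟨bbᵀ, X⟩ = 1 (where ⟨A,B⟩ = tr(AᵀB)), one has ⟨A, X⟩ ≥ 1/(xᵀb); moreover, X₀ = x xᵀ/(xᵀb)² is feasible (i.e., ⟨bbᵀ, X₀⟩ = 1, X₀ ⪰ 0) and achieves ⟨A, X₀⟩ = 1/(xᵀb). -/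
/-!
By Cauchy–Schwarz for the form of `A`, the matrix `(xᵀAx) A - (Ax)(Ax)ᵀ` is positive
semidefinite, and the trace of a product of two positive semidefinite matrices is nonnegative.
Pairing with `X` gives `bᵀXb ≤ ⟨A, X⟩ (xᵀb)` for `b = Ax`, which is the lower bound once
`bᵀXb = 1`; the rank-one matrix `X₀` attains it.
-/

open Matrix

namespace Matrix

variable {m n 𝕜 : Type*} [Fintype m] [Fintype n]

lemma trace_mul_vecMulVec {R : Type*} [NonUnitalSemiring R] (M : Matrix m n R) (u : n → R)
    (v : m → R) : (M * vecMulVec u v).trace = M *ᵥ u ⬝ᵥ v := by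
  rw [mul_vecMulVec, trace_vecMulVec]

lemma trace_vecMulVec_mul {R : Type*} [CommSemiring R] (u : m → R) (v : n → R)
    (M : Matrix n m R) : (vecMulVec u v * M).trace = v ⬝ᵥ M *ᵥ u := by
  rw [trace_mul_comm, trace_mul_vecMulVec, dotProduct_comm]

open scoped MatrixOrder ComplexOrder in
lemma PosSemidef.trace_mul_nonneg [RCLike 𝕜] {X M : Matrix n n 𝕜} (hX : X.PosSemidef)
    (hM : M.PosSemidef) : 0 ≤ (X * M).trace := by
  classical
  obtain ⟨E, rfl⟩ := CStarAlgebra.nonneg_iff_eq_star_mul_self.mp hX.nonneg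
  rw [star_eq_conjTranspose, mul_assoc, trace_mul_comm]
  exact (hM.mul_mul_conjTranspose_same E).trace_nonneg

lemma PosSemidef.dotProduct_mulVec_sq_le {A : Matrix n n ℝ} (hA : A.PosSemidef) (v w : n → ℝ) :
    (v ⬝ᵥ A *ᵥ w) ^ 2 ≤ (v ⬝ᵥ A *ᵥ v) * (w ⬝ᵥ A *ᵥ w) := by
  classical
  simpa only [toBilin'_apply'] using (toBilin' A).apply_sq_le_of_symm
    (fun u ↦ by simpa [toBilin'_apply'] using hA.dotProduct_mulVec_nonneg u)
    (LinearMap.BilinForm.isSymm_iff.mp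
      (isSymm_toBilin'_iff_isSymm.mpr (isHermitian_iff_isSymm.mp hA.isHermitian))) v w

lemma PosSemidef.posSemidef_smul_sub_vecMulVec {A : Matrix n n ℝ} (hA : A.PosSemidef)
    (x : n → ℝ) : ((x ⬝ᵥ A *ᵥ x) • A - vecMulVec (A *ᵥ x) (A *ᵥ x)).PosSemidef := by
  refine posSemidef_iff_dotProduct_mulVec.mpr ⟨?_, fun v ↦ ?_⟩
  · rw [isHermitian_iff_isSymm]
    simp [IsSymm, transpose_vecMulVec, (isHermitian_iff_isSymm.mp hA.isHermitian).eq]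
  · rw [star_trivial, sub_mulVec, dotProduct_sub, smul_mulVec, dotProduct_smul, smul_eq_mul,
      dotProduct_mulVec v (vecMulVec _ _), vecMul_vecMulVec, smul_dotProduct, smul_eq_mul,
      dotProduct_comm (A *ᵥ x) v, ← sq, sub_nonneg, mul_comm]
    exact hA.dotProduct_mulVec_sq_le v x

lemma PosSemidef.dotProduct_mulVec_le_trace_mul_mul {A X : Matrix n n ℝ} (hA : A.PosSemidef)
    (hX : X.PosSemidef) (x : n → ℝ) :
    A *ᵥ x ⬝ᵥ X *ᵥ (A *ᵥ x) ≤ (A * X).trace * (x ⬝ᵥ A *ᵥ x) := by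
  have h := hX.trace_mul_nonneg (hA.posSemidef_smul_sub_vecMulVec x)
  rwa [Matrix.mul_sub, trace_sub, Matrix.mul_smul, trace_smul, trace_mul_vecMulVec,
    trace_mul_comm, dotProduct_comm (X *ᵥ _), smul_eq_mul, sub_nonneg, mul_comm] at h

end Matrix

theorem stmt_0 (n : ℕ) (A : Matrix (Fin n) (Fin n) ℝ) (b x : Fin n → ℝ)
    (hA : A.PosSemidef) (hx : A.mulVec x = b) (hxb : x ⬝ᵥ b ≠ 0) :
    (∀ X : Matrix (Fin n) (Fin n) ℝ, X.PosSemidef →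
      ((Matrix.vecMulVec b b)ᵀ * X).trace = 1 →
      1 / (x ⬝ᵥ b) ≤ (Aᵀ * X).trace) ∧
    ((((x ⬝ᵥ b)^2)⁻¹ • Matrix.vecMulVec x x).PosSemidef ∧
      ((Matrix.vecMulVec b b)ᵀ * (((x ⬝ᵥ b)^2)⁻¹ • Matrix.vecMulVec x x)).trace = 1 ∧
      (Aᵀ * (((x ⬝ᵥ b)^2)⁻¹ • Matrix.vecMulVec x x)).trace = 1 / (x ⬝ᵥ b)) := by
  have hAt : Aᵀ = A := (isHermitian_iff_isSymm.mp hA.isHermitian).eq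
  have hxb_pos : 0 < x ⬝ᵥ b := (hx ▸ hA.dotProduct_mulVec_nonneg x).lt_of_ne' hxb
  rw [hAt, transpose_vecMulVec]
  refine ⟨fun X hX hfeas ↦ ?_, ?_, ?_, ?_⟩
  · rw [trace_vecMulVec_mul] at hfeas
    rw [div_le_iff₀ hxb_pos, ← hfeas, ← hx]
    exact hA.dotProduct_mulVec_le_trace_mul_mul hX x
  · exact (posSemidef_vecMulVec_self_star x).smul (inv_nonneg.mpr (sq_nonneg _))
  · rw [Matrix.mul_smul, trace_smul, vecMulVec_mul_vecMulVec, trace_vecMulVec, dotProduct_smul,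
      smul_eq_mul, smul_eq_mul, dotProduct_comm b x]
    field_simp
  · rw [Matrix.mul_smul, trace_smul, trace_mul_vecMulVec, hx, smul_eq_mul, dotProduct_comm]
    field_simp
end

section
/- Fix j ∈ {1,…,n} and y ∈ R^n with all y_i nonzero and |y_i| pairwise distinct. Then Σ_{σ ∈ {±1}^n} (1 − e^{−2πi σ_j y_j}) / (σ_j y_j ∏_{i≠j}(σ_j y_j − σ_i y_i)) = Σ_{σ ∈ {±1}} (2σ y_j)^{n−1} (1 − e^{−2πi σ y_j}) / (σ y_j ∏_{i≠j}(y_j² − y_i²)). -/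
open Real

/-- Sign associated to a boolean: `true ↦ 1`, `false ↦ -1`. -/
def bsgn (b : Bool) : ℝ := if b then 1 else -1

/-! Writing `a = σ_j y_j`, the summand for fixed `σ_j` is `C / a` times `∏_{i ≠ j} (a - σ_i y_i)⁻¹`,
so summing over the other signs turns it into `∏_{i ≠ j} ((a - y_i)⁻¹ + (a + y_i)⁻¹)`, and each
factor is `2a / (a² - y_i²) = 2a / (y_j² - y_i²)`. -/

theorem bsgn_sq (b : Bool) : bsgn b ^ 2 = 1 := by
  cases b <;> norm_num [bsgn]

theorem inv_sub_add_inv_add {K : Type*} [Field K] {a c : K} (h : a ^ 2 ≠ c ^ 2) :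
    (a - c)⁻¹ + (a + c)⁻¹ = 2 * a / (a ^ 2 - c ^ 2) := by
  have hsub : a - c ≠ 0 := fun h' => h (by rw [sub_eq_zero.1 h'])
  have hadd : a + c ≠ 0 := fun h' => h (by rw [eq_neg_of_add_eq_zero_left h', neg_sq])
  rw [inv_add_inv hsub hadd]
  ring

theorem sum_bool_inv_sub_bsgn_mul (a : ℂ) (c : ℝ) (h : a ^ 2 ≠ (c : ℂ) ^ 2) :
    ∑ s : Bool, (a - ((bsgn s * c : ℝ) : ℂ))⁻¹ = 2 * a / (a ^ 2 - (c : ℂ) ^ 2) := by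
  rw [← inv_sub_add_inv_add h, Fintype.sum_bool]
  norm_num [bsgn, add_comm]

theorem sum_signs_prod_inv_sub {ι : Type*} [Fintype ι] [DecidableEq ι] (a : ℂ) (c : ι → ℝ)
    (h : ∀ i, a ^ 2 ≠ (c i : ℂ) ^ 2) :
    ∑ τ : ι → Bool, ∏ i, (a - ((bsgn (τ i) * c i : ℝ) : ℂ))⁻¹
      = (2 * a) ^ Fintype.card ι / ∏ i, (a ^ 2 - (c i : ℂ) ^ 2) := by
  rw [← Fintype.prod_sum (fun i s => (a - ((bsgn s * c i : ℝ) : ℂ))⁻¹)]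
  simp only [sum_bool_inv_sub_bsgn_mul a _ (h _), Finset.prod_div_distrib, Finset.prod_const,
    Finset.card_univ]

theorem sum_signs_div_mul_prod_sub {ι : Type*} [Fintype ι] [DecidableEq ι] (C a : ℂ) (c : ι → ℝ)
    (h : ∀ i, a ^ 2 ≠ (c i : ℂ) ^ 2) :
    ∑ τ : ι → Bool, C / (a * ∏ i, (a - ((bsgn (τ i) * c i : ℝ) : ℂ)))
      = (2 * a) ^ Fintype.card ι * C / (a * ∏ i, (a ^ 2 - (c i : ℂ) ^ 2)) := by
  simp only [div_mul_eq_div_div C a, div_eq_mul_inv (C / a), ← Finset.prod_inv_distrib,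
    ← Finset.mul_sum, sum_signs_prod_inv_sub a c h]
  ring

theorem Fintype.sum_funSplitAt {ι α M : Type*} [Fintype ι] [DecidableEq ι] [Fintype α]
    [AddCommMonoid M] (j : ι) (F : α → ({i // i ≠ j} → α) → M) :
    ∑ σ : ι → α, F (σ j) (fun i => σ i) = ∑ a, ∑ τ, F a τ := by
  rw [← Fintype.sum_prod_type']
  exact (Equiv.funSplitAt j α).sum_comp (fun p => F p.1 p.2)

theorem stmt_13_general (n : ℕ) (j : Fin n) (y : Fin n → ℝ)
    (hy' : ∀ i k, i ≠ k → |y i| ≠ |y k|) :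
    ∑ σ : Fin n → Bool,
        (1 - Complex.exp (-2 * π * Complex.I * (bsgn (σ j) * y j : ℝ))) /
          ((bsgn (σ j) * y j : ℝ) *
            ∏ i ∈ Finset.univ.erase j,
              ((bsgn (σ j) * y j : ℝ) - (bsgn (σ i) * y i : ℝ) : ℂ))
      = ∑ σ : Bool,
          ((2 * bsgn σ * y j : ℝ) : ℂ)^(n-1) *
            (1 - Complex.exp (-2 * π * Complex.I * (bsgn σ * y j : ℝ))) /
              ((bsgn σ * y j : ℝ) *
                ∏ i ∈ Finset.univ.erase j, (((y j : ℂ))^2 - ((y i : ℂ))^2)) := by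
  have herase : ∀ i, i ∈ Finset.univ.erase j ↔ i ≠ j := by simp
  simp only [Finset.prod_subtype _ herase]
  refine (Fintype.sum_funSplitAt j fun b (τ : {i // i ≠ j} → Bool) =>
    (1 - Complex.exp (-2 * π * Complex.I * (bsgn b * y j : ℝ))) /
      (((bsgn b * y j : ℝ) : ℂ) * ∏ i, (((bsgn b * y j : ℝ) : ℂ) - ((bsgn (τ i) * y i : ℝ) : ℂ))))
    |>.trans (Fintype.sum_congr _ _ fun b => ?_)
  have hsq : ((bsgn b * y j : ℝ) : ℂ) ^ 2 = (y j : ℂ) ^ 2 := by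
    rw [← Complex.ofReal_pow, mul_pow, bsgn_sq, one_mul, Complex.ofReal_pow]
  have hne : ∀ i : {i // i ≠ j}, ((bsgn b * y j : ℝ) : ℂ) ^ 2 ≠ (y i : ℂ) ^ 2 := by
    intro i
    rw [hsq]
    exact_mod_cast fun h => hy' j i (Ne.symm i.2) (sq_eq_sq_iff_abs_eq_abs _ _ |>.1 h)
  have hcard : Fintype.card {i // i ≠ j} = n - 1 := by simp
  rw [sum_signs_div_mul_prod_sub _ _ _ hne, hcard, hsq]
  push_cast
  ring

theorem stmt_13 (n : ℕ) (j : Fin n) (y : Fin n → ℝ)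
    (hy : ∀ i, y i ≠ 0) (hy' : ∀ i k, i ≠ k → |y i| ≠ |y k|) :
    ∑ σ : Fin n → Bool,
        (1 - Complex.exp (-2 * π * Complex.I * (bsgn (σ j) * y j : ℝ))) /
          ((bsgn (σ j) * y j : ℝ) *
            ∏ i ∈ Finset.univ.erase j,
              ((bsgn (σ j) * y j : ℝ) - (bsgn (σ i) * y i : ℝ) : ℂ))
      = ∑ σ : Bool,
          ((2 * bsgn σ * y j : ℝ) : ℂ)^(n-1) *
            (1 - Complex.exp (-2 * π * Complex.I * (bsgn σ * y j : ℝ))) /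
              ((bsgn σ * y j : ℝ) *
                ∏ i ∈ Finset.univ.erase j, (((y j : ℂ))^2 - ((y i : ℂ))^2)) :=
  stmt_13_general n j y hy'
end

section
/- Let H₂ = {x ∈ R² : |x₁| + |x₂| + |x₁ + x₂| ≤ 1} and C = [−1/2, 0] × [0, 1/2]. There exists a linear map r of R² of order 6 preserving H₂ such that H₂ = C ∪ r²C ∪ r⁴C, and the three pieces C, r²C, r⁴C have pairwise Lebesgue-null intersections. Consequently, for any continuous function p invariant under r², ∫_{H₂} p(x) dx = 3∫_C p(x) dx = 3∫₀^{1/2}∫_{−1/2}^0 p(x₁,x₂) dx₁ dx₂. -/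
open MeasureTheory

noncomputable def fmap (a b c d : ℝ) : (Fin 2 → ℝ) →ₗ[ℝ] (Fin 2 → ℝ) where
  toFun x := ![a * x 0 + b * x 1, c * x 0 + d * x 1]
  map_add' x y := by funext i; fin_cases i <;> simp <;> ring
  map_smul' m x := by funext i; fin_cases i <;> simp <;> ring

noncomputable def rr : (Fin 2 → ℝ) ≃ₗ[ℝ] (Fin 2 → ℝ) :=
  LinearEquiv.ofLinear (fmap 0 (-1) 1 1) (fmap 1 1 (-1) 0)
    (by apply LinearMap.ext; intro x; funext i; fin_cases i <;> simp [fmap])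
    (by apply LinearMap.ext; intro x; funext i; fin_cases i <;> simp [fmap])

lemma rr_apply (x : Fin 2 → ℝ) : rr x = ![-(x 1), x 0 + x 1] := by
  funext i; fin_cases i <;> simp [rr, fmap]

lemma rr2_apply (x : Fin 2 → ℝ) : (rr ^ 2) x = ![-(x 0) - x 1, x 0] := by
  have : (rr ^ 2) x = rr (rr x) := by rw [pow_two]; rfl
  rw [this, rr_apply, rr_apply]
  funext i; fin_cases i <;> simp <;> ring

lemma rr4_apply (x : Fin 2 → ℝ) : (rr ^ 4) x = ![x 1, -(x 0) - x 1] := by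
  have : (rr ^ 4) x = (rr ^ 2) ((rr ^ 2) x) := by rw [show (4:ℕ) = 2 + 2 from rfl, pow_add]; rfl
  rw [this, rr2_apply, rr2_apply]
  funext i; fin_cases i <;> simp <;> ring

lemma rr_pow_apply (n : ℕ) (x : Fin 2 → ℝ) : (rr ^ (n+1)) x = rr ((rr ^ n) x) := by
  rw [pow_succ']; rfl

lemma rr_order : orderOf rr = 6 := by
  have h6 : rr ^ 6 = 1 := by
    apply LinearEquiv.ext; intro x
    simp only [rr_pow_apply, pow_zero, rr_apply, LinearEquiv.coe_one, id_eq]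
    funext i; fin_cases i <;> simp <;> ring
  rw [orderOf_eq_iff (by norm_num)]
  refine ⟨h6, ?_⟩
  intro m hm hm0 h1
  have key : (rr ^ m) ![(1:ℝ), 0] = ![(1:ℝ), 0] := by rw [h1]; rfl
  interval_cases m <;>
    simp only [rr_pow_apply, pow_zero, rr_apply, LinearEquiv.coe_one, id_eq] at key <;>
    · have := congrFun key 0
      have := congrFun key 1
      simp_all

def Cset : Set (Fin 2 → ℝ) := {x | x 0 ∈ Set.Icc (-(1/2 : ℝ)) 0 ∧ x 1 ∈ Set.Icc (0:ℝ) (1/2)}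

lemma image2_eq : ⇑(rr ^ 2) '' Cset
    = {x : Fin 2 → ℝ | (-(1/2:ℝ) ≤ x 1 ∧ x 1 ≤ 0) ∧ -(1/2:ℝ) ≤ x 0 + x 1 ∧ x 0 + x 1 ≤ 0} := by
  ext x
  constructor
  · rintro ⟨y, ⟨⟨hy1, hy2⟩, hy3, hy4⟩, rfl⟩
    rw [rr2_apply]
    simp only [Set.mem_setOf_eq, Matrix.cons_val_zero, Matrix.cons_val_one, Matrix.head_cons]
    constructor
    · constructor <;> linarith
    · constructor <;> linarith
  · rintro ⟨⟨h1, h2⟩, h3, h4⟩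
    refine ⟨![x 1, -(x 0) - x 1], ⟨⟨by simpa using h1, by simpa using h2⟩, ?_, ?_⟩, ?_⟩
    · simp; linarith
    · simp; linarith
    · rw [rr2_apply]; funext i; fin_cases i <;> simp <;> ring

lemma image4_eq : ⇑(rr ^ 4) '' Cset
    = {x : Fin 2 → ℝ | ((0:ℝ) ≤ x 0 ∧ x 0 ≤ 1/2) ∧ (0:ℝ) ≤ x 0 + x 1 ∧ x 0 + x 1 ≤ 1/2} := by
  ext x
  constructor
  · rintro ⟨y, ⟨⟨hy1, hy2⟩, hy3, hy4⟩, rfl⟩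
    rw [rr4_apply]
    simp only [Set.mem_setOf_eq, Matrix.cons_val_zero, Matrix.cons_val_one, Matrix.head_cons]
    constructor
    · constructor <;> linarith
    · constructor <;> linarith
  · rintro ⟨⟨h1, h2⟩, h3, h4⟩
    refine ⟨![-(x 0) - x 1, x 0], ⟨⟨by simp; linarith, by simp; linarith⟩, ?_, ?_⟩, ?_⟩
    · simp; linarith
    · simp; linarith
    · rw [rr4_apply]; funext i; fin_cases i <;> simp <;> ring

lemma hex_eq : {x : Fin 2 → ℝ | |x 0| + |x 1| + |x 0 + x 1| ≤ 1}
    = Cset ∪ ⇑(rr ^ 2) '' Cset ∪ ⇑(rr ^ 4) '' Cset := by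
  rw [image2_eq, image4_eq]
  ext x
  simp only [Set.mem_union, Set.mem_setOf_eq, Cset, Set.mem_Icc]
  constructor
  · intro h
    rcases abs_cases (x 0) with ⟨e0, s0⟩ | ⟨e0, s0⟩ <;>
      rcases abs_cases (x 1) with ⟨e1, s1⟩ | ⟨e1, s1⟩ <;>
      rcases abs_cases (x 0 + x 1) with ⟨e2, s2⟩ | ⟨e2, s2⟩ <;>
      rw [e0, e1, e2] at h
    · exact Or.inr ⟨⟨by linarith, by linarith⟩, by linarith, by linarith⟩
    · exact Or.inr ⟨⟨by linarith, by linarith⟩, by linarith, by linarith⟩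
    · exact Or.inr ⟨⟨by linarith, by linarith⟩, by linarith, by linarith⟩
    · exact Or.inl (Or.inr ⟨⟨by linarith, by linarith⟩, by linarith, by linarith⟩)
    · exact Or.inl (Or.inl ⟨⟨by linarith, by linarith⟩, by linarith, by linarith⟩)
    · exact Or.inl (Or.inl ⟨⟨by linarith, by linarith⟩, by linarith, by linarith⟩)
    · exact Or.inl (Or.inr ⟨⟨by linarith, by linarith⟩, by linarith, by linarith⟩)
    · exact Or.inl (Or.inr ⟨⟨by linarith, by linarith⟩, by linarith, by linarith⟩)
  · intro h
    rcases abs_cases (x 0) with ⟨e0, s0⟩ | ⟨e0, s0⟩ <;>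
      rcases abs_cases (x 1) with ⟨e1, s1⟩ | ⟨e1, s1⟩ <;>
      rcases abs_cases (x 0 + x 1) with ⟨e2, s2⟩ | ⟨e2, s2⟩ <;>
      rw [e0, e1, e2] <;>
      rcases h with (⟨⟨a1, a2⟩, b1, b2⟩ | ⟨⟨a1, a2⟩, b1, b2⟩) | ⟨⟨a1, a2⟩, b1, b2⟩ <;>
      linarith

lemma line_null (f : (Fin 2 → ℝ) →ₗ[ℝ] ℝ) (w : Fin 2 → ℝ) (hw : f w ≠ 0) :
    volume {x : Fin 2 → ℝ | f x = 0} = 0 := by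
  have : {x : Fin 2 → ℝ | f x = 0} = (LinearMap.ker f : Set (Fin 2 → ℝ)) := by
    ext x; simp [LinearMap.mem_ker]
  rw [this]
  apply Measure.addHaar_submodule
  intro h
  exact hw (LinearMap.mem_ker.mp (h ▸ Submodule.mem_top (x := w)))

noncomputable def proj01 : (Fin 2 → ℝ) →ₗ[ℝ] ℝ :=
  (LinearMap.proj 0 : ((Fin 2 → ℝ) →ₗ[ℝ] ℝ)) + (LinearMap.proj 1 : ((Fin 2 → ℝ) →ₗ[ℝ] ℝ))

lemma null12 : volume (Cset ∩ ⇑(rr ^ 2) '' Cset) = 0 := by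
  refine measure_mono_null ?_ (line_null (LinearMap.proj 1) ![0, 1] (by simp))
  · rw [image2_eq]
    rintro x ⟨⟨_, h1, _⟩, ⟨_, h2⟩, _⟩
    simp only [Set.mem_setOf_eq, LinearMap.proj_apply]
    linarith

lemma null14 : volume (Cset ∩ ⇑(rr ^ 4) '' Cset) = 0 := by
  refine measure_mono_null ?_ (line_null (LinearMap.proj 0) ![1, 0] (by simp))
  · rw [image4_eq]
    rintro x ⟨⟨⟨_, h1⟩, _⟩, ⟨h2, _⟩, _⟩
    simp only [Set.mem_setOf_eq, LinearMap.proj_apply]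
    linarith

lemma null24 : volume (⇑(rr ^ 2) '' Cset ∩ ⇑(rr ^ 4) '' Cset) = 0 := by
  refine measure_mono_null ?_ (line_null proj01 ![1, 0] (by simp [proj01]))
  · rw [image2_eq, image4_eq]
    rintro x ⟨⟨_, _, h1⟩, _, h2, _⟩
    simp only [Set.mem_setOf_eq, proj01, LinearMap.add_apply, LinearMap.proj_apply]
    linarith

lemma rr2_det : LinearMap.det ((rr ^ 2 : (Fin 2 → ℝ) ≃ₗ[ℝ] (Fin 2 → ℝ)) : (Fin 2 → ℝ) →ₗ[ℝ] (Fin 2 → ℝ)) = 1 := by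
  rw [← LinearMap.det_toMatrix', Matrix.det_fin_two]
  simp only [LinearMap.toMatrix'_apply, LinearEquiv.coe_coe, rr2_apply]
  norm_num

lemma rr4_det : LinearMap.det ((rr ^ 4 : (Fin 2 → ℝ) ≃ₗ[ℝ] (Fin 2 → ℝ)) : (Fin 2 → ℝ) →ₗ[ℝ] (Fin 2 → ℝ)) = 1 := by
  rw [← LinearMap.det_toMatrix', Matrix.det_fin_two]
  simp only [LinearMap.toMatrix'_apply, LinearEquiv.coe_coe, rr4_apply]
  norm_num

lemma rr_pow_cont (n : ℕ) : Continuous ⇑(rr ^ n) := by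
  have := LinearMap.continuous_of_finiteDimensional
    ((rr ^ n : (Fin 2 → ℝ) ≃ₗ[ℝ] (Fin 2 → ℝ)) : (Fin 2 → ℝ) →ₗ[ℝ] (Fin 2 → ℝ))
  simpa using this

lemma rr_pow_mp (n : ℕ)
    (hdet : LinearMap.det ((rr ^ n : (Fin 2 → ℝ) ≃ₗ[ℝ] (Fin 2 → ℝ)) : (Fin 2 → ℝ) →ₗ[ℝ] (Fin 2 → ℝ)) = 1) :
    MeasurePreserving ⇑(rr ^ n) volume volume := by
  refine ⟨(rr_pow_cont n).measurable, ?_⟩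
  have h := Measure.map_linearMap_addHaar_eq_smul_addHaar (E := Fin 2 → ℝ) volume
    (f := ((rr ^ n : (Fin 2 → ℝ) ≃ₗ[ℝ] (Fin 2 → ℝ)) : (Fin 2 → ℝ) →ₗ[ℝ] (Fin 2 → ℝ)))
    (by rw [hdet]; norm_num)
  rw [hdet] at h
  simpa using h

noncomputable def rr_pow_me (n : ℕ) : (Fin 2 → ℝ) ≃ᵐ (Fin 2 → ℝ) where
  toEquiv := (rr ^ n).toEquiv
  measurable_toFun := (rr_pow_cont n).measurable
  measurable_invFun := by
    have := LinearMap.continuous_of_finiteDimensional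
      (((rr ^ n).symm : (Fin 2 → ℝ) ≃ₗ[ℝ] (Fin 2 → ℝ)) : (Fin 2 → ℝ) →ₗ[ℝ] (Fin 2 → ℝ))
    exact this.measurable

lemma rr_pow_emb (n : ℕ) : MeasurableEmbedding ⇑(rr ^ n) := by
  have := (rr_pow_me n).measurableEmbedding
  exact this

lemma Cset_compact : IsCompact Cset := by
  have hsub : Cset ⊆ Set.pi Set.univ (fun _ : Fin 2 => Set.Icc (-(1/2:ℝ)) (1/2)) := by
    rintro x ⟨⟨h1, h2⟩, h3, h4⟩ i _
    fin_cases i <;> constructor <;> simp <;> linarith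
  have hclosed : IsClosed Cset := by
    have : Cset = (fun x : Fin 2 → ℝ => x 0) ⁻¹' Set.Icc (-(1/2:ℝ)) 0
        ∩ (fun x : Fin 2 → ℝ => x 1) ⁻¹' Set.Icc (0:ℝ) (1/2) := rfl
    rw [this]
    exact (isClosed_Icc.preimage (continuous_apply 0)).inter
      (isClosed_Icc.preimage (continuous_apply 1))
  exact (isCompact_univ_pi (fun _ => isCompact_Icc)).of_isClosed_subset hclosed hsub

lemma Cset_meas : MeasurableSet Cset :=
  ((measurable_pi_apply 0) measurableSet_Icc).inter ((measurable_pi_apply 1) measurableSet_Icc)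

lemma integral_eq (p : (Fin 2 → ℝ) → ℝ) (hc : Continuous p) (hp : ∀ x, p ((rr ^ 2) x) = p x) :
    ∫ x in {x : Fin 2 → ℝ | |x 0| + |x 1| + |x 0 + x 1| ≤ 1}, p x = 3 * ∫ x in Cset, p x := by
  have hp4 : ∀ x, p ((rr ^ 4) x) = p x := by
    intro x
    have h : (rr ^ 4) x = (rr ^ 2) ((rr ^ 2) x) := by
      rw [show (4:ℕ) = 2 + 2 from rfl, pow_add]; rfl
    rw [h, hp, hp]
  have hK2 : IsCompact (⇑(rr ^ 2) '' Cset) := Cset_compact.image (rr_pow_cont 2)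
  have hK4 : IsCompact (⇑(rr ^ 4) '' Cset) := Cset_compact.image (rr_pow_cont 4)
  have hi0 : IntegrableOn p Cset volume := hc.continuousOn.integrableOn_compact Cset_compact
  have hi2 : IntegrableOn p (⇑(rr ^ 2) '' Cset) volume := hc.continuousOn.integrableOn_compact hK2
  have hi4 : IntegrableOn p (⇑(rr ^ 4) '' Cset) volume := hc.continuousOn.integrableOn_compact hK4
  have hd14 : AEDisjoint volume Cset (⇑(rr ^ 4) '' Cset) := null14
  have hd24 : AEDisjoint volume (⇑(rr ^ 2) '' Cset) (⇑(rr ^ 4) '' Cset) := null24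
  have hd12 : AEDisjoint volume Cset (⇑(rr ^ 2) '' Cset) := null12
  rw [hex_eq]
  rw [integral_union_ae (AEDisjoint.union_left hd14 hd24) hK4.measurableSet.nullMeasurableSet
    (hi0.union hi2) hi4]
  rw [integral_union_ae hd12 hK2.measurableSet.nullMeasurableSet hi0 hi2]
  have e2 : ∫ x in ⇑(rr ^ 2) '' Cset, p x = ∫ x in Cset, p x := by
    rw [(rr_pow_mp 2 rr2_det).setIntegral_image_emb (rr_pow_emb 2) p Cset]
    simp only [hp]
  have e4 : ∫ x in ⇑(rr ^ 4) '' Cset, p x = ∫ x in Cset, p x := by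
    rw [(rr_pow_mp 4 rr4_det).setIntegral_image_emb (rr_pow_emb 4) p Cset]
    simp only [hp4]
  rw [e2, e4]; ring

theorem stmt_19 :
    ∃ r : (Fin 2 → ℝ) ≃ₗ[ℝ] (Fin 2 → ℝ),
      orderOf r = 6 ∧
      (∀ x, x ∈ {x : Fin 2 → ℝ | |x 0| + |x 1| + |x 0 + x 1| ≤ 1} ↔
        r x ∈ {x : Fin 2 → ℝ | |x 0| + |x 1| + |x 0 + x 1| ≤ 1}) ∧
      {x : Fin 2 → ℝ | |x 0| + |x 1| + |x 0 + x 1| ≤ 1}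
        = {x : Fin 2 → ℝ | x 0 ∈ Set.Icc (-(1/2 : ℝ)) 0 ∧ x 1 ∈ Set.Icc (0:ℝ) (1/2)}
          ∪ ⇑(r ^ 2) '' {x : Fin 2 → ℝ | x 0 ∈ Set.Icc (-(1/2 : ℝ)) 0 ∧ x 1 ∈ Set.Icc (0:ℝ) (1/2)}
          ∪ ⇑(r ^ 4) '' {x : Fin 2 → ℝ | x 0 ∈ Set.Icc (-(1/2 : ℝ)) 0 ∧ x 1 ∈ Set.Icc (0:ℝ) (1/2)} ∧
      volume ({x : Fin 2 → ℝ | x 0 ∈ Set.Icc (-(1/2 : ℝ)) 0 ∧ x 1 ∈ Set.Icc (0:ℝ) (1/2)}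
        ∩ ⇑(r ^ 2) '' {x : Fin 2 → ℝ | x 0 ∈ Set.Icc (-(1/2 : ℝ)) 0 ∧ x 1 ∈ Set.Icc (0:ℝ) (1/2)}) = 0 ∧
      volume ({x : Fin 2 → ℝ | x 0 ∈ Set.Icc (-(1/2 : ℝ)) 0 ∧ x 1 ∈ Set.Icc (0:ℝ) (1/2)}
        ∩ ⇑(r ^ 4) '' {x : Fin 2 → ℝ | x 0 ∈ Set.Icc (-(1/2 : ℝ)) 0 ∧ x 1 ∈ Set.Icc (0:ℝ) (1/2)}) = 0 ∧
      volume (⇑(r ^ 2) '' {x : Fin 2 → ℝ | x 0 ∈ Set.Icc (-(1/2 : ℝ)) 0 ∧ x 1 ∈ Set.Icc (0:ℝ) (1/2)}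
        ∩ ⇑(r ^ 4) '' {x : Fin 2 → ℝ | x 0 ∈ Set.Icc (-(1/2 : ℝ)) 0 ∧ x 1 ∈ Set.Icc (0:ℝ) (1/2)}) = 0 ∧
      ∀ p : (Fin 2 → ℝ) → ℝ, Continuous p → (∀ x, p ((r ^ 2) x) = p x) →
        ∫ x in {x : Fin 2 → ℝ | |x 0| + |x 1| + |x 0 + x 1| ≤ 1}, p x
          = 3 * ∫ x in {x : Fin 2 → ℝ | x 0 ∈ Set.Icc (-(1/2 : ℝ)) 0 ∧ x 1 ∈ Set.Icc (0:ℝ) (1/2)}, p x := by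
  refine ⟨rr, rr_order, ?_, hex_eq, null12, null14, null24, fun p hc hp => integral_eq p hc hp⟩
  intro x
  simp only [Set.mem_setOf_eq, rr_apply, Matrix.cons_val_zero, Matrix.cons_val_one,
    Matrix.head_cons]
  rw [show -(x 1) + (x 0 + x 1) = x 0 by ring, abs_neg]
  constructor <;> intro h <;> linarith
end
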